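/- Let H ∈ C(ℝⁿ×ℝⁿ) satisfy condition (A6)₋. Then for every x ∈ ℝⁿ the strict sublevel set {p ∈ ℝⁿ : H(x,p) < 0} is convex. -/
import Mathlib


noncomputable section

open Filter Set Topology

namespace HJpaper

/-- Points of `ℝⁿ` (with the Euclidean norm). -/
abbrev E (n : ℕ) := EuclideanSpace ℝ (Fin n)

/-- The vector of `ℝⁿ` with integer coordinates `k`. -/
def lat (n : ℕ) (k : Fin n → ℤ) : E n :=
  (WithLp.equiv 2 (Fin n → ℝ)).symm fun i => (k i : ℝ)

/-- `f : ℝⁿ → ℝ` is `ℤⁿ`-periodic. -/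
def Per {n : ℕ} (f : E n → ℝ) : Prop :=
  ∀ (x : E n) (k : Fin n → ℤ), f (x + lat n k) = f x

/-- (A2): continuity of the Hamiltonian. -/
def ContH {n : ℕ} (H : E n → E n → ℝ) : Prop :=
  Continuous fun q : E n × E n => H q.1 q.2

/-- (A3): `ℤⁿ`-periodicity of the Hamiltonian in `x`. -/
def PerH {n : ℕ} (H : E n → E n → ℝ) : Prop :=
  ∀ p : E n, Per fun x => H x p

/-- (A4): coercivity of the Hamiltonian. -/
def Coercive {n : ℕ} (H : E n → E n → ℝ) : Prop :=
  ∀ M : ℝ, ∃ r : ℝ, ∀ x p : E n, r ≤ ‖p‖ → M ≤ H x p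

/-- viscosity subsolution of `u_t + H(x, D_x u) = 0` in `Q = ℝⁿ × (0,∞)`. -/
def CPSub {n : ℕ} (H : E n → E n → ℝ) (u : E n → ℝ → ℝ) : Prop :=
  ∀ φ : E n → ℝ → ℝ, ContDiff ℝ 1 (fun q : E n × ℝ => φ q.1 q.2) →
    ∀ (x : E n) (t : ℝ), 0 < t →
      IsLocalMaxOn (fun q : E n × ℝ => u q.1 q.2 - φ q.1 q.2)
        {q : E n × ℝ | 0 < q.2} (x, t) →
      deriv (fun s => φ x s) t + H x (gradient (fun y => φ y t) x) ≤ 0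

/-- viscosity supersolution of `u_t + H(x, D_x u) = 0` in `Q = ℝⁿ × (0,∞)`. -/
def CPSuper {n : ℕ} (H : E n → E n → ℝ) (u : E n → ℝ → ℝ) : Prop :=
  ∀ φ : E n → ℝ → ℝ, ContDiff ℝ 1 (fun q : E n × ℝ => φ q.1 q.2) →
    ∀ (x : E n) (t : ℝ), 0 < t →
      IsLocalMinOn (fun q : E n × ℝ => u q.1 q.2 - φ q.1 q.2)
        {q : E n × ℝ | 0 < q.2} (x, t) →
      0 ≤ deriv (fun s => φ x s) t + H x (gradient (fun y => φ y t) x)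

/-- viscosity solution of `u_t + H(x, D_x u) = 0` in `Q`. -/
def CPSol {n : ℕ} (H : E n → E n → ℝ) (u : E n → ℝ → ℝ) : Prop :=
  CPSub H u ∧ CPSuper H u

/-- `u` is a solution of the Cauchy problem (CP) for the data `u₀`: it is uniformly
continuous on `ℝⁿ × [0,∞)`, `ℤⁿ`-periodic in `x`, a viscosity solution of the PDE in
`Q = ℝⁿ × (0,∞)`, and attains the initial data (continuously, by uniform continuity). -/
def IsCP {n : ℕ} (H : E n → E n → ℝ) (u₀ : E n → ℝ) (u : E n → ℝ → ℝ) : Prop :=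
  UniformContinuousOn (fun q : E n × ℝ => u q.1 q.2) {q : E n × ℝ | 0 ≤ q.2} ∧
  (∀ t : ℝ, 0 ≤ t → Per fun x => u x t) ∧
  CPSol H u ∧
  ∀ x : E n, u x 0 = u₀ x

/-- viscosity subsolution of `H(x, Dv(x)) ≤ g(x)` in `ℝⁿ`. -/
def StatSub {n : ℕ} (H : E n → E n → ℝ) (g : E n → ℝ) (v : E n → ℝ) : Prop :=
  ∀ φ : E n → ℝ, ContDiff ℝ 1 φ →
    ∀ x : E n, IsLocalMax (fun y => v y - φ y) x → H x (gradient φ x) ≤ g x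

/-- viscosity supersolution of `H(x, Dv(x)) ≥ g(x)` in `ℝⁿ`. -/
def StatSuper {n : ℕ} (H : E n → E n → ℝ) (g : E n → ℝ) (v : E n → ℝ) : Prop :=
  ∀ φ : E n → ℝ, ContDiff ℝ 1 φ →
    ∀ x : E n, IsLocalMin (fun y => v y - φ y) x → g x ≤ H x (gradient φ x)

/-- viscosity solution of `H(x, Dv(x)) = c` in `ℝⁿ`. -/
def StatSol {n : ℕ} (H : E n → E n → ℝ) (c : ℝ) (v : E n → ℝ) : Prop :=
  StatSub H (fun _ => c) v ∧ StatSuper H (fun _ => c) v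

/-- Lipschitz continuity (with some constant). -/
def IsLip {n : ℕ} (f : E n → ℝ) : Prop := ∃ K : NNReal, LipschitzWith K f

/-- (A5): the additive eigenvalue is zero, i.e. `H(x,Dv)=0` has a Lipschitz
`ℤⁿ`-periodic viscosity solution. -/
def A5 {n : ℕ} (H : E n → E n → ℝ) : Prop :=
  ∃ v : E n → ℝ, IsLip v ∧ Per v ∧ StatSol H 0 v

/-- condition (A6)₊. -/
def A6plus {n : ℕ} (H : E n → E n → ℝ) : Prop :=
  ∃ η₀ > (0:ℝ), ∃ θ₀ > (1:ℝ),
    ∀ η ∈ Set.Ioo (0:ℝ) η₀, ∀ θ ∈ Set.Ioo (1:ℝ) θ₀, ∃ ψ > (0:ℝ),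
      ∀ x p q : E n, H x p ≤ 0 → η ≤ H x q → η * θ + ψ ≤ H x (p + θ • (q - p))

/-- condition (A6)₋. -/
def A6minus {n : ℕ} (H : E n → E n → ℝ) : Prop :=
  ∃ η₀ > (0:ℝ), ∃ θ₀ > (1:ℝ),
    ∀ η ∈ Set.Ioo (0:ℝ) η₀, ∀ θ ∈ Set.Ioo (1:ℝ) θ₀, ∃ ψ > (0:ℝ),
      ∀ x p q : E n, H x p ≤ 0 → -η ≤ H x q → -(η * θ) + ψ ≤ H x (p + θ • (q - p))

/-- the modulus `ω_{H,R}`. -/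
def omegaH {n : ℕ} (H : E n → E n → ℝ) (R r : ℝ) : ℝ :=
  sSup {a : ℝ | ∃ x p q : E n, ‖p‖ ≤ R ∧ ‖q‖ ≤ R ∧ ‖p - q‖ ≤ r ∧ a = |H x p - H x q|}

/-- `w(x,t) = sup_{s ≥ t} [u(x,t) − v₀(x) − θ(u(x,s) − v₀(x) + η(s−t))]`. -/
def wPlus {n : ℕ} (u : E n → ℝ → ℝ) (v₀ : E n → ℝ) (η θ : ℝ) (x : E n) (t : ℝ) : ℝ :=
  sSup {a : ℝ | ∃ s : ℝ, t ≤ s ∧ a = u x t - v₀ x - θ * (u x s - v₀ x + η * (s - t))}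

/-- `w(x,t) = max_{0 ≤ s ≤ t} [u(x,t) − v₀(x) − θ(u(x,s) − v₀(x) − η(s−t))]`. -/
def wMinus {n : ℕ} (u : E n → ℝ → ℝ) (v₀ : E n → ℝ) (η θ : ℝ) (x : E n) (t : ℝ) : ℝ :=
  sSup {a : ℝ | ∃ s : ℝ, 0 ≤ s ∧ s ≤ t ∧ a = u x t - v₀ x - θ * (u x s - v₀ x - η * (s - t))}

/-- under (A6)₋ the strict sublevel set `{p : H(x,p) < 0}` is convex. -/
theorem stmt_16 {n : ℕ} (H : E n → E n → ℝ) (hHc : ContH H) (hA6 : A6minus H) :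
    ∀ x : E n, Convex ℝ {p : E n | H x p < 0} := by
  obtain ⟨η₀, hη₀, θ₀, hθ₀, hA⟩ := hA6
  intro x
  -- Key step: if H x p ≤ 0 and H x q ≥ 0 then H x (p + θ(q-p)) ≥ 0 for θ ∈ (1,θ₀).
  have key : ∀ p q : E n, H x p ≤ 0 → 0 ≤ H x q → ∀ θ ∈ Set.Ioo (1:ℝ) θ₀,
      0 ≤ H x (p + θ • (q - p)) := by
    intro p q hp hq θ hθ
    by_contra hneg
    push_neg at hneg
    set r := p + θ • (q - p) with hr
    have hθpos : (0:ℝ) < θ := lt_trans one_pos hθ.1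
    set η := min (η₀ / 2) (-H x r / (2 * θ)) with hηdef
    have hη1 : 0 < η := lt_min (by linarith) (div_pos (by linarith) (by positivity))
    have hηmem : η ∈ Set.Ioo (0:ℝ) η₀ := ⟨hη1, lt_of_le_of_lt (min_le_left _ _) (by linarith)⟩
    obtain ⟨ψ, hψ, hmain⟩ := hA η hηmem θ hθ
    have h1 : -(η * θ) + ψ ≤ H x r := hmain x p q hp (le_trans (by linarith) hq)
    have hle : η ≤ -H x r / (2 * θ) := min_le_right _ _
    have h3 : η * θ ≤ -H x r / 2 := by
      have h4 := mul_le_mul_of_nonneg_right hle (le_of_lt hθpos)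
      have h5 : -H x r / (2 * θ) * θ = -H x r / 2 := by field_simp
      linarith [h4, h5.le, h5.ge]
    linarith
  intro p hpmem q hqmem a b ha hb hab
  simp only [Set.mem_setOf_eq] at hpmem hqmem ⊢
  by_contra h
  push_neg at h
  have hpt : a • p + b • q = p + b • (q - p) := by
    have : a = 1 - b := by linarith
    rw [this]; module
  set g : ℝ → ℝ := fun t => H x (p + t • (q - p)) with hg
  have hgc : Continuous g := by
    have hco : g = (fun q' : E n × E n => H q'.1 q'.2) ∘ (fun t : ℝ => (x, p + t • (q - p))) := rfl
    rw [hco]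
    exact hHc.comp (continuous_const.prodMk
      (continuous_const.add (continuous_id.smul continuous_const)))
  have hg0 : g 0 = H x p := by simp [hg]
  have hg1 : g 1 = H x q := by simp [hg]
  have hgb : 0 ≤ g b := by rw [hg]; rw [hpt] at h; exact h
  set S : Set ℝ := Set.Icc (0:ℝ) 1 ∩ {t | 0 ≤ g t} with hS
  have hScl : IsClosed {t : ℝ | 0 ≤ g t} := isClosed_le continuous_const hgc
  have hScomp : IsCompact S := isCompact_Icc.inter_right hScl
  have hb1 : b ≤ 1 := by linarith
  have hSne : S.Nonempty := ⟨b, ⟨hb, hb1⟩, hgb⟩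
  set t₁ := sSup S with ht₁def
  have ht₁ : t₁ ∈ S := hScomp.sSup_mem hSne
  have ht₁pos : 0 < t₁ := by
    rcases lt_or_eq_of_le ht₁.1.1 with h' | h'
    · exact h'
    · exfalso; have h2 : 0 ≤ g t₁ := ht₁.2; rw [← h', hg0] at h2
      exact absurd h2 (not_le.mpr hpmem)
  have ht₁lt : t₁ < 1 := by
    rcases lt_or_eq_of_le ht₁.1.2 with h' | h'
    · exact h'
    · exfalso; have h2 : 0 ≤ g t₁ := ht₁.2; rw [h', hg1] at h2
      exact absurd h2 (not_le.mpr hqmem)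
  set θ := min ((1 + θ₀) / 2) (1 / t₁) with hθdef
  have hθ1 : 1 < θ := lt_min (by linarith) (by rw [lt_div_iff₀ ht₁pos]; linarith)
  have hθ2 : θ < θ₀ := lt_of_le_of_lt (min_le_left _ _) (by linarith)
  have hθt₁ : θ * t₁ ≤ 1 := by
    have := min_le_right ((1 + θ₀) / 2) (1 / t₁)
    calc θ * t₁ ≤ (1 / t₁) * t₁ := mul_le_mul_of_nonneg_right this ht₁pos.le
      _ = 1 := by field_simp
  have hkey := key p (p + t₁ • (q - p)) (le_of_lt hpmem) ht₁.2 θ ⟨hθ1, hθ2⟩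
  have heq : p + θ • ((p + t₁ • (q - p)) - p) = p + (θ * t₁) • (q - p) := by
    rw [add_sub_cancel_left, smul_smul]
  rw [heq] at hkey
  have hmemS : θ * t₁ ∈ S := ⟨⟨by positivity, hθt₁⟩, hkey⟩
  have : θ * t₁ ≤ t₁ := le_csSup hScomp.bddAbove hmemS
  nlinarith
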